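/- Let f₀ be a continuous log-concave probability density on ℝ with quantile function F₀⁻¹ and density quantile function J₀ := f₀ ∘ F₀⁻¹. For j ∈ ℤ define u_j := 2^{j−1} if j ≤ 0 and u_j := 1 − 2^{−(j+1)} if j ≥ 1, and a_j := F₀⁻¹(u_j). Then for each j ∈ ℤ, sup over x', x'' ∈ [a_j, a_{j+1}] of f₀(x')/f₀(x'') is at most 2. -/

import Mathlib

open MeasureTheory Real

/-- The dyadic grid of quantile levels: `u_j = 2^{j−1}` for `j ≤ 0` and
`u_j = 1 − 2^{−(j+1)}` for `j ≥ 1`. -/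
noncomputable def uGrid (j : ℤ) : ℝ := if j ≤ 0 then (2:ℝ) ^ (j - 1) else 1 - (2:ℝ) ^ (-(j + 1))

/-!
For a log-concave density `f` with distribution function `F`, the ratio `F / f` is nondecreasing:
if `f x > f a` for some `a < x`, then `log f` is bounded above on `(-∞, a]` and below on `[a, x]`
by its secant line through `a` and `x`, which bounds `F a` from above and `F x - F a` from below
by exponential integrals. Reflecting `f`, the ratio `(1 - F) / f` is nonincreasing. On the cell
`[a_j, a_{j+1}]` the distribution function and the upper tail each change by a factor of at most
`2`, so `f` is at most twice its value at either endpoint, and by log-concavity it is at least the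
smaller of the two endpoint values everywhere on the cell.
-/

open Set

/-- Log-concavity in multiplicative form; for `f ≥ 0` it says that `log ∘ f` is concave as a map to
`[-∞, ∞)`. -/
def IsLogConcave (f : ℝ → ℝ) : Prop :=
  ∀ x y : ℝ, ∀ t ∈ Icc (0:ℝ) 1, f x ^ t * f y ^ (1 - t) ≤ f (t * x + (1 - t) * y)

theorem setIntegral_Iic_le_of_le_mul_exp {f : ℝ → ℝ} {a c K : ℝ} (hf : IntegrableOn f (Iic a))
    (hc : 0 < c) (hbd : ∀ t ≤ a, f t ≤ K * exp (c * (t - a))) :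
    ∫ t in Iic a, f t ≤ K / c := by
  have hexp : (fun t => K * exp (c * (t - a))) = fun t => K / exp (c * a) * exp (c * t) := by
    ext t
    rw [mul_sub, exp_sub]
    ring
  calc ∫ t in Iic a, f t ≤ ∫ t in Iic a, K * exp (c * (t - a)) :=
        setIntegral_mono_on hf (hexp ▸ (integrableOn_exp_mul_Iic hc a).const_mul _)
          measurableSet_Iic hbd
    _ = K / c := by
        rw [hexp, integral_const_mul, integral_exp_mul_Iic hc]
        field_simp

theorem mul_exp_sub_one_div_le_intervalIntegral {f : ℝ → ℝ} {a x c K : ℝ}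
    (hf : IntervalIntegrable f volume a x) (hax : a ≤ x) (hc : c ≠ 0)
    (hbd : ∀ t ∈ Icc a x, K * exp (c * (t - a)) ≤ f t) :
    K * (exp (c * (x - a)) - 1) / c ≤ ∫ t in a..x, f t := by
  calc K * (exp (c * (x - a)) - 1) / c = ∫ t in a..x, K * exp (c * (t - a)) := by
        simp_rw [intervalIntegral.integral_const_mul, mul_sub]
        rw [intervalIntegral.integral_comp_mul_sub (fun y => exp y) hc, integral_exp, sub_self,
          exp_zero, smul_eq_mul]
        field_simp
    _ ≤ ∫ t in a..x, f t :=
        intervalIntegral.integral_mono_on hax ((by fun_prop : Continuous _).intervalIntegrable _ _)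
          hf hbd

namespace IsLogConcave

variable {f : ℝ → ℝ}

theorem comp_neg (hf : IsLogConcave f) : IsLogConcave (fun t => f (-t)) := fun x y t ht => by
  simpa only [mul_neg, ← neg_add] using hf (-x) (-y) t ht

theorem min_le_of_mem_Icc (hf : IsLogConcave f) (hnn : ∀ x, 0 ≤ f x) {a b x : ℝ}
    (hx : x ∈ Icc a b) : min (f a) (f b) ≤ f x := by
  obtain ⟨s, t, hs, ht, hst, rfl⟩ := (Convex.mem_Icc (hx.1.trans hx.2)).1 hx
  obtain rfl : t = 1 - s := by linarith
  have hm := le_min (hnn a) (hnn b)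
  calc min (f a) (f b) = min (f a) (f b) ^ s * min (f a) (f b) ^ (1 - s) := by
        rw [← rpow_add' hm (by norm_num), add_sub_cancel, rpow_one]
    _ ≤ f a ^ s * f b ^ (1 - s) := by
        gcongr
        exacts [rpow_nonneg (hnn a) s, min_le_left _ _, min_le_right _ _]
    _ ≤ f (s * a + (1 - s) * b) := hf a b s ⟨hs, by linarith⟩

theorem concaveOn_log (hf : IsLogConcave f) (hnn : ∀ x, 0 ≤ f x) :
    ConcaveOn ℝ {x | 0 < f x} (fun x => log (f x)) := by
  refine ⟨convex_iff_ordConnected.2 ⟨fun a (ha : 0 < f a) b (hb : 0 < f b) x hx =>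
    (lt_min ha hb).trans_le (hf.min_le_of_mem_Icc hnn hx)⟩, ?_⟩
  intro x (hx : 0 < f x) y (hy : 0 < f y) s t hs ht hst
  obtain rfl : t = 1 - s := by linarith
  have hxy : 0 < f x ^ s * f y ^ (1 - s) := by positivity
  calc s • log (f x) + (1 - s) • log (f y) = log (f x ^ s * f y ^ (1 - s)) := by
        rw [log_mul (by positivity) (by positivity), log_rpow hx, log_rpow hy, smul_eq_mul,
          smul_eq_mul]
    _ ≤ log (f (s • x + (1 - s) • y)) := log_le_log hxy (hf x y s ⟨hs, by linarith⟩)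

theorem le_mul_exp_slope_of_le (hf : IsLogConcave f) (hnn : ∀ x, 0 ≤ f x) {a x t : ℝ}
    (ha : 0 < f a) (hx : 0 < f x) (hax : a < x) (hta : t ≤ a) :
    f t ≤ f a * exp (slope (fun s => log (f s)) a x * (t - a)) := by
  rcases hta.eq_or_lt with rfl | hta
  · simp
  rcases (hnn t).eq_or_lt with ht | ht
  · rw [← ht]; positivity
  have hslope :=
    (hf.concaveOn_log hnn).slope_anti ha ⟨ht, hta.ne⟩ ⟨hx, hax.ne'⟩ (hta.trans hax).le
  rw [slope_def_field _ a t, le_div_iff_of_neg (by linarith)] at hslope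
  rw [← log_le_log_iff ht (by positivity), log_mul ha.ne' (exp_pos _).ne', log_exp]
  linarith

theorem mul_exp_slope_le_of_mem_Icc (hf : IsLogConcave f) (hnn : ∀ x, 0 ≤ f x) {a x t : ℝ}
    (ha : 0 < f a) (hx : 0 < f x) (ht : t ∈ Icc a x) :
    f a * exp (slope (fun s => log (f s)) a x * (t - a)) ≤ f t := by
  rcases ht.1.eq_or_lt with rfl | hat
  · simp
  have hft : 0 < f t := (lt_min ha hx).trans_le (hf.min_le_of_mem_Icc hnn ht)
  have hslope :=
    (hf.concaveOn_log hnn).slope_anti ha ⟨hft, hat.ne'⟩ ⟨hx, (hat.trans_le ht.2).ne'⟩ ht.2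
  rw [slope_def_field _ a t, le_div_iff₀ (by linarith)] at hslope
  rw [← log_le_log_iff (by positivity) hft, log_mul ha.ne' (exp_pos _).ne', log_exp]
  linarith

theorem mul_integral_Iic_le_of_lt (hf : IsLogConcave f) (hnn : ∀ x, 0 ≤ f x)
    (hint : Integrable f) {a x : ℝ} (hax : a < x) (ha : 0 < f a) (hxa : f a < f x) :
    f x * ∫ t in Iic a, f t ≤ f a * ∫ t in Iic x, f t := by
  set c := slope (fun s => log (f s)) a x with hc_def
  have hc : 0 < c := by
    rw [hc_def, slope_def_field]
    exact div_pos (sub_pos.2 (log_lt_log ha hxa)) (sub_pos.2 hax)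
  have hexp : exp (c * (x - a)) = f x / f a := by
    rw [hc_def, slope_def_field, div_mul_cancel₀ _ (sub_pos.2 hax).ne', exp_sub, exp_log ha,
      exp_log (ha.trans hxa)]
  have hleft : ∫ t in Iic a, f t ≤ f a / c :=
    setIntegral_Iic_le_of_le_mul_exp hint.integrableOn hc fun t ht =>
      hf.le_mul_exp_slope_of_le hnn ha (ha.trans hxa) hax ht
  have hmid : (f x - f a) / c ≤ ∫ t in a..x, f t := by
    have := mul_exp_sub_one_div_le_intervalIntegral hint.intervalIntegrable hax.le hc.ne'
      fun t ht => hf.mul_exp_slope_le_of_mem_Icc hnn ha (ha.trans hxa) ht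
    rwa [hexp, mul_sub, mul_div_cancel₀ _ ha.ne', mul_one] at this
  have hsplit : ∫ t in Iic x, f t = (∫ t in Iic a, f t) + ∫ t in a..x, f t := by
    rw [← intervalIntegral.integral_Iic_sub_Iic hint.integrableOn hint.integrableOn]
    ring
  rw [hsplit]
  set Fa := ∫ t in Iic a, f t
  calc f x * Fa = f a * Fa + (f x - f a) * Fa := by ring
    _ ≤ f a * Fa + (f x - f a) * (f a / c) := by gcongr
    _ = f a * Fa + f a * ((f x - f a) / c) := by ring
    _ ≤ f a * (Fa + ∫ t in a..x, f t) := by rw [mul_add]; gcongr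

theorem mul_integral_Iic_le (hf : IsLogConcave f) (hnn : ∀ x, 0 ≤ f x) (hint : Integrable f)
    {a x : ℝ} (hax : a ≤ x) : f x * ∫ t in Iic a, f t ≤ f a * ∫ t in Iic x, f t := by
  have hFa : 0 ≤ ∫ t in Iic a, f t := setIntegral_nonneg measurableSet_Iic fun t _ => hnn t
  rcases le_or_gt (f x) (f a) with hxa | hxa
  · calc f x * ∫ t in Iic a, f t ≤ f a * ∫ t in Iic a, f t := by gcongr
      _ ≤ f a * ∫ t in Iic x, f t := mul_le_mul_of_nonneg_left (setIntegral_mono_set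
          hint.integrableOn (.of_forall hnn) (Iic_subset_Iic.2 hax).eventuallyLE) (hnn a)
  rcases (hnn a).eq_or_lt with ha | ha
  · have hzero : ∀ t ∈ Iic a, f t = 0 := fun t ht => by
      have := hf.min_le_of_mem_Icc hnn ⟨ht, hax⟩
      rw [← ha, min_le_iff] at this
      exact (hnn t).antisymm' (this.resolve_right (by linarith))
    rw [setIntegral_eq_zero_of_forall_eq_zero hzero, ← ha]
    simp
  · exact hf.mul_integral_Iic_le_of_lt hnn hint (hax.lt_of_ne (by rintro rfl; exact hxa.false))
      ha hxa

theorem le_mul_of_integral_Iic_le (hf : IsLogConcave f) (hnn : ∀ x, 0 ≤ f x)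
    (hint : Integrable f) {a x r : ℝ} (hax : a ≤ x) (hFa : 0 < ∫ t in Iic a, f t)
    (hr : ∫ t in Iic x, f t ≤ r * ∫ t in Iic a, f t) : f x ≤ r * f a := by
  refine le_of_mul_le_mul_right ?_ hFa
  calc f x * ∫ t in Iic a, f t ≤ f a * ∫ t in Iic x, f t := hf.mul_integral_Iic_le hnn hint hax
    _ ≤ f a * (r * ∫ t in Iic a, f t) := mul_le_mul_of_nonneg_left hr (hnn a)
    _ = r * f a * ∫ t in Iic a, f t := by ring

theorem le_mul_of_integral_Ioi_le (hf : IsLogConcave f) (hnn : ∀ x, 0 ≤ f x)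
    (hint : Integrable f) {x b r : ℝ} (hxb : x ≤ b) (hFb : 0 < ∫ t in Ioi b, f t)
    (hr : ∫ t in Ioi x, f t ≤ r * ∫ t in Ioi b, f t) : f x ≤ r * f b := by
  simpa only [neg_neg] using hf.comp_neg.le_mul_of_integral_Iic_le (fun t => hnn (-t))
    hint.comp_neg (neg_le_neg hxb) (by rwa [integral_comp_neg_Iic, neg_neg])
    (by rwa [integral_comp_neg_Iic, integral_comp_neg_Iic, neg_neg, neg_neg])

end IsLogConcave

theorem two_zpow_le_half {k : ℤ} (hk : k ≤ -1) : (2:ℝ) ^ k ≤ 1 / 2 := by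
  calc (2:ℝ) ^ k ≤ 2 ^ (-1 : ℤ) := zpow_le_zpow_right₀ one_le_two hk
    _ = 1 / 2 := by norm_num

theorem uGrid_of_nonpos {j : ℤ} (hj : j ≤ 0) : uGrid j = 2 ^ (j - 1) := if_pos hj

theorem uGrid_of_pos {j : ℤ} (hj : 0 < j) : uGrid j = 1 - 2 ^ (-(j + 1)) := if_neg hj.not_ge

theorem uGrid_pos (j : ℤ) : 0 < uGrid j := by
  rcases le_or_gt j 0 with hj | hj
  · rw [uGrid_of_nonpos hj]; positivity
  · rw [uGrid_of_pos hj]; linarith [two_zpow_le_half (k := -(j + 1)) (by omega)]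

theorem uGrid_lt_one (j : ℤ) : uGrid j < 1 := by
  rcases le_or_gt j 0 with hj | hj
  · rw [uGrid_of_nonpos hj]; linarith [two_zpow_le_half (k := j - 1) (by omega)]
  · rw [uGrid_of_pos hj]; linarith [zpow_pos (two_pos : (0:ℝ) < 2) (-(j + 1))]

theorem uGrid_add_one_le_two_mul (j : ℤ) : uGrid (j + 1) ≤ 2 * uGrid j := by
  rcases lt_trichotomy j 0 with hj | rfl | hj
  · rw [uGrid_of_nonpos hj, uGrid_of_nonpos hj.le, add_sub_cancel_right,
      zpow_sub_one₀ two_ne_zero]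
    linarith
  · norm_num [uGrid]
  · rw [uGrid_of_pos hj, uGrid_of_pos (by omega : 0 < j + 1),
      show -(j + 1 + 1) = -(j + 1) - 1 by ring, zpow_sub_one₀ two_ne_zero]
    linarith [two_zpow_le_half (k := -(j + 1)) (by omega)]

theorem one_sub_uGrid_le_two_mul (j : ℤ) : 1 - uGrid j ≤ 2 * (1 - uGrid (j + 1)) := by
  rcases lt_trichotomy j 0 with hj | rfl | hj
  · rw [uGrid_of_nonpos hj, uGrid_of_nonpos hj.le, add_sub_cancel_right,
      zpow_sub_one₀ two_ne_zero]
    linarith [two_zpow_le_half (k := j) (by omega), zpow_pos (two_pos : (0:ℝ) < 2) j]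
  · norm_num [uGrid]
  · rw [uGrid_of_pos hj, uGrid_of_pos (by omega : 0 < j + 1),
      show -(j + 1 + 1) = -(j + 1) - 1 by ring, zpow_sub_one₀ two_ne_zero]
    linarith

theorem density_ratio_on_dyadic_cell_general
    (f₀ : ℝ → ℝ)
    (hf_nonneg : ∀ x, 0 ≤ f₀ x) (hf_int : Integrable f₀ volume) (hf_mass : ∫ x, f₀ x = 1)
    (hlogconc : ∀ x y : ℝ, ∀ t ∈ Set.Icc (0:ℝ) 1,
      f₀ x ^ t * f₀ y ^ (1 - t) ≤ f₀ (t * x + (1 - t) * y))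
    (Finv : ℝ → ℝ) (hFinv : ∀ u ∈ Set.Ioo (0:ℝ) 1, (∫ t in Set.Iic (Finv u), f₀ t) = u)
    : ∀ j : ℤ, ∀ x' ∈ Set.Icc (Finv (uGrid j)) (Finv (uGrid (j + 1))),
      ∀ x'' ∈ Set.Icc (Finv (uGrid j)) (Finv (uGrid (j + 1))),
      f₀ x' ≤ 2 * f₀ x'' := by
  intro j x' hx' x'' hx''
  have hlc : IsLogConcave f₀ := hlogconc
  have hF (k : ℤ) : ∫ t in Iic (Finv (uGrid k)), f₀ t = uGrid k :=
    hFinv _ ⟨uGrid_pos k, uGrid_lt_one k⟩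
  have hG (k : ℤ) : ∫ t in Ioi (Finv (uGrid k)), f₀ t = 1 - uGrid k := by
    rw [← compl_Iic, setIntegral_compl measurableSet_Iic hf_int, hf_mass, hF]
  have hmono {s t : Set ℝ} (hst : s ⊆ t) : ∫ x in s, f₀ x ≤ ∫ x in t, f₀ x :=
    setIntegral_mono_set hf_int.integrableOn (.of_forall hf_nonneg) hst.eventuallyLE
  have hleft : f₀ x' ≤ 2 * f₀ (Finv (uGrid j)) := by
    refine hlc.le_mul_of_integral_Iic_le hf_nonneg hf_int hx'.1 (by rw [hF]; exact uGrid_pos j) ?_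
    calc ∫ t in Iic x', f₀ t ≤ uGrid (j + 1) := hF (j + 1) ▸ hmono (Iic_subset_Iic.2 hx'.2)
      _ ≤ 2 * ∫ t in Iic (Finv (uGrid j)), f₀ t := by rw [hF]; exact uGrid_add_one_le_two_mul j
  have hright : f₀ x' ≤ 2 * f₀ (Finv (uGrid (j + 1))) := by
    refine hlc.le_mul_of_integral_Ioi_le hf_nonneg hf_int hx'.2
      (by rw [hG]; exact sub_pos.2 (uGrid_lt_one _)) ?_
    calc ∫ t in Ioi x', f₀ t ≤ 1 - uGrid j := hG j ▸ hmono (Ioi_subset_Ioi hx'.1)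
      _ ≤ 2 * ∫ t in Ioi (Finv (uGrid (j + 1))), f₀ t := by
          rw [hG]; exact one_sub_uGrid_le_two_mul j
  calc f₀ x' ≤ 2 * min (f₀ (Finv (uGrid j))) (f₀ (Finv (uGrid (j + 1)))) := by
        rw [mul_min_of_nonneg _ _ zero_le_two]; exact le_min hleft hright
    _ ≤ 2 * f₀ x'' := by gcongr; exact hlc.min_le_of_mem_Icc hf_nonneg hx''

/-- On each cell `[a_j, a_{j+1}]` of the dyadic quantile grid `a_j = F₀⁻¹(u_j)`, a
continuous log-concave density varies by at most a multiplicative factor of `2`. -/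
theorem density_ratio_on_dyadic_cell
    (f₀ : ℝ → ℝ) (hcont : Continuous f₀)
    (hf_nonneg : ∀ x, 0 ≤ f₀ x) (hf_int : Integrable f₀ volume) (hf_mass : ∫ x, f₀ x = 1)
    (hlogconc : ∀ x y : ℝ, ∀ t ∈ Set.Icc (0:ℝ) 1,
      f₀ x ^ t * f₀ y ^ (1 - t) ≤ f₀ (t * x + (1 - t) * y))
    (Finv : ℝ → ℝ) (hFinv : ∀ u ∈ Set.Ioo (0:ℝ) 1, (∫ t in Set.Iic (Finv u), f₀ t) = u)
    (ψ₀ : ℝ → ℝ)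
    (hψ : ∀ x : ℝ, 0 < f₀ x →
      HasDerivWithinAt (fun t => Real.log (f₀ t)) (ψ₀ x) (Set.Ici x) x)
    : ∀ j : ℤ, ∀ x' ∈ Set.Icc (Finv (uGrid j)) (Finv (uGrid (j + 1))),
      ∀ x'' ∈ Set.Icc (Finv (uGrid j)) (Finv (uGrid (j + 1))),
      f₀ x' ≤ 2 * f₀ x'' :=
  density_ratio_on_dyadic_cell_general f₀ hf_nonneg hf_int hf_mass hlogconc Finv hFinv
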